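/- Assume the Setup. Let L ∈ A satisfy condition (2), and let U ⊆ M be a k-subspace that is maximal (with respect to inclusion) among all k-subspaces of M satisfying condition (1) for L. Define 𝓜 := {a ∈ A : a·U₀ ⊆ U} and 𝓓 := {a ∈ A : a·U ⊆ U}. Then 𝓓 = {a ∈ A : ad_{L}^{N}(a) = 0 for some N ≥ 0} = {a ∈ A : a·𝓜 ⊆ 𝓜}. -/

import Mathlib

/-- `adOp a b x = a*x - x*b`, the operator `ad_{a,b}`. -/
def adOp {A : Type*} [Ring A] (a b : A) : A → A := fun x => a * x - x * b

/-- The ad-nilpotency degree of `b` with respect to `L₀`: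
the smallest `n` with `ad_{L₀}^[n+1] b = 0`. -/
noncomputable def degAd {A : Type*} [Ring A] (L₀ b : A) : ℕ :=
  sInf {n : ℕ | (adOp L₀ L₀)^[n + 1] b = 0}

/-- Condition (2) of Theorem 4.4: `L = L₀` or `deg(L - L₀) < 0`, expressed via some `s' ∈ S`
with `s'(L - L₀)` a nonzero element of `B` of `ad_{L₀}`-degree smaller than that of `s'`. -/
def cond2 {k A : Type*} [CommSemiring k] [Ring A] [Algebra k A]
    (B : Subalgebra k A) (S : Set A) (L₀ L : A) : Prop :=
  L = L₀ ∨ ∃ s' ∈ S, s' * (L - L₀) ∈ B ∧ s' * (L - L₀) ≠ 0 ∧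
    degAd L₀ (s' * (L - L₀)) < degAd L₀ s'

/-- A `k`-subspace of the `A`-module `M` (with `k` acting through `algebraMap k A`). -/
def isSubspace (k A : Type*) {M : Type*} [CommSemiring k] [Ring A] [Algebra k A]
    [AddCommGroup M] [Module A M] (U : Set M) : Prop :=
  (0 : M) ∈ U ∧ (∀ u ∈ U, ∀ v ∈ U, u + v ∈ U) ∧
    (∀ c : k, ∀ u ∈ U, (algebraMap k A c) • u ∈ U)

/-!
`ad_L`-nilpotent elements stabilise `U`: if `ad_L a` does, then `U + a • U` is again an `L`-stable
subspace commensurable with `U₀`, so it equals `U` by maximality.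

Conversely, `deg x = deg_{L₀} (t * x) - deg_{L₀} t` (for any `t ∈ S` with `t * x ∈ B`) is a
well-defined degree on `A`, additive on products because `deg_{L₀}` is (Leibniz rule, `A` a domain
of characteristic zero). `ad_{L₀}` lowers it by one, and condition (2) says `deg (L - L₀) < 0`,
so `ad_L` lowers it as well. If `a • 𝓜 ⊆ 𝓜`, the whole `ad_L`-orbit of `a` stays in that set,
so `s * ad_L^N a * s ∈ B` for the `s` of condition (1), whence `deg (ad_L^N a) ≥ -2 deg_{L₀} s`
unless `ad_L^N a = 0`: the orbit must reach `0`. Since `𝓓 ⊆ {a | a • 𝓜 ⊆ 𝓜}` trivially, both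
equalities follow.
-/

open Finset

section AdOp

variable {A : Type*} [Ring A]

def adHom (l : A) : A →+ A where
  toFun := adOp l l
  map_zero' := by simp [adOp]
  map_add' x y := by simp only [adOp, mul_add, add_mul]; abel

@[simp] lemma coe_adHom (l : A) : ⇑(adHom l) = adOp l l := rfl

lemma adOp_mul (l x y : A) : adOp l l (x * y) = adOp l l x * y + x * adOp l l y := by
  simp only [adOp]; noncomm_ring

lemma iterate_adOp_mul (l x y : A) (n : ℕ) :
    (adOp l l)^[n] (x * y) =
      ∑ ij ∈ antidiagonal n, n.choose ij.1 • ((adOp l l)^[ij.1] x * (adOp l l)^[ij.2] y) := by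
  induction n with
  | zero => simp
  | succ n ih =>
    rw [sum_antidiagonal_choose_succ_nsmul
      (fun i j ↦ (adOp l l)^[i] x * (adOp l l)^[j] y) n, Function.iterate_succ_apply', ih,
      ← coe_adHom, map_sum]
    simp only [map_nsmul, coe_adHom, adOp_mul, ← Function.iterate_succ_apply' (adOp l l),
      nsmul_add, sum_add_distrib]
    rw [add_comm]
    congr 1
    refine sum_congr rfl fun ⟨i, j⟩ hij ↦ ?_
    rw [HasAntidiagonal.mem_antidiagonal] at hij
    rw [Nat.choose_symm_of_eq_add hij.symm]

variable {l b c : A}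

lemma degAd_le_of_iterate_eq_zero {n : ℕ} (h : (adOp l l)^[n + 1] b = 0) : degAd l b ≤ n :=
  Nat.sInf_le h

lemma iterate_adOp_eq_zero_of_degAd_lt (hb : ∃ n, (adOp l l)^[n] b = 0) {n : ℕ}
    (hn : degAd l b < n) : (adOp l l)^[n] b = 0 := by
  obtain ⟨m, hm⟩ := hb
  have hdeg : (adOp l l)^[degAd l b + 1] b = 0 := by
    refine Nat.sInf_mem (s := {n | (adOp l l)^[n + 1] b = 0}) ⟨m, ?_⟩
    show (adOp l l)^[m + 1] b = 0
    rw [Function.iterate_succ_apply', hm, ← coe_adHom, map_zero]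
  obtain ⟨p, rfl⟩ := Nat.exists_eq_add_of_lt hn
  rw [add_right_comm, add_comm, Function.iterate_add_apply, hdeg, ← coe_adHom, iterate_map_zero]

lemma iterate_adOp_degAd_ne_zero (hb : b ≠ 0) : (adOp l l)^[degAd l b] b ≠ 0 := by
  intro h
  cases hd : degAd l b with
  | zero => exact hb (by rwa [hd] at h)
  | succ n =>
    rw [hd] at h
    have := degAd_le_of_iterate_eq_zero h
    omega

lemma degAd_adOp_lt (hb : ∃ n, (adOp l l)^[n] b = 0) (h : adOp l l b ≠ 0) :
    degAd l (adOp l l b) < degAd l b := by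
  have hpos : degAd l b ≠ 0 := fun h0 ↦
    h (iterate_adOp_eq_zero_of_degAd_lt hb (n := 1) (by omega))
  have : (adOp l l)^[degAd l b - 1 + 1] (adOp l l b) = 0 := by
    rw [← Function.iterate_succ_apply]
    exact iterate_adOp_eq_zero_of_degAd_lt hb (by omega)
  have := degAd_le_of_iterate_eq_zero this
  omega

lemma degAd_neg (b : A) : degAd l (-b) = degAd l b := by
  simp only [degAd, ← coe_adHom, iterate_map_neg, neg_eq_zero]

lemma degAd_add_le (hb : ∃ n, (adOp l l)^[n] b = 0) (hc : ∃ n, (adOp l l)^[n] c = 0) :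
    degAd l (b + c) ≤ max (degAd l b) (degAd l c) := by
  apply degAd_le_of_iterate_eq_zero
  rw [← coe_adHom, iterate_map_add, coe_adHom, iterate_adOp_eq_zero_of_degAd_lt hb (by omega),
    iterate_adOp_eq_zero_of_degAd_lt hc (by omega), add_zero]

lemma degAd_mul [IsDomain A] [CharZero A] (hb0 : b ≠ 0) (hc0 : c ≠ 0)
    (hb : ∃ n, (adOp l l)^[n] b = 0) (hc : ∃ n, (adOp l l)^[n] c = 0) :
    degAd l (b * c) = degAd l b + degAd l c := by
  set m := degAd l b
  set n := degAd l c
  have hterm : ∀ i j, m < i ∨ n < j → (adOp l l)^[i] b * (adOp l l)^[j] c = 0 := by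
    rintro i j (hi | hj)
    · rw [iterate_adOp_eq_zero_of_degAd_lt hb hi, zero_mul]
    · rw [iterate_adOp_eq_zero_of_degAd_lt hc hj, mul_zero]
  have hvanish : (adOp l l)^[m + n + 1] (b * c) = 0 := by
    rw [iterate_adOp_mul]
    refine sum_eq_zero fun ⟨i, j⟩ hij ↦ ?_
    rw [HasAntidiagonal.mem_antidiagonal] at hij
    rw [hterm i j (by omega), smul_zero]
  have hlead : (adOp l l)^[m + n] (b * c) =
      (m + n).choose m • ((adOp l l)^[m] b * (adOp l l)^[n] c) := by
    rw [iterate_adOp_mul]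
    refine sum_eq_single (m, n) (fun ⟨i, j⟩ hij hne ↦ ?_) (by simp)
    rw [HasAntidiagonal.mem_antidiagonal] at hij
    rw [hterm i j (by grind), smul_zero]
  have hne : (adOp l l)^[m + n] (b * c) ≠ 0 := by
    rw [hlead]
    exact smul_ne_zero (Nat.choose_pos (by omega)).ne'
      (mul_ne_zero (iterate_adOp_degAd_ne_zero hb0) (iterate_adOp_degAd_ne_zero hc0))
  have hge : ¬ degAd l (b * c) < m + n := fun hlt ↦
    hne (iterate_adOp_eq_zero_of_degAd_lt ⟨_, hvanish⟩ hlt)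
  have := degAd_le_of_iterate_eq_zero hvanish
  omega

end AdOp

structure IsLeftDenominatorSet {A : Type*} [Ring A] (B : Subring A) (S : Set A) : Prop where
  subset : S ⊆ B
  mul_mem : ∀ ⦃s⦄, s ∈ S → ∀ ⦃t⦄, t ∈ S → s * t ∈ S
  commute : ∀ ⦃s⦄, s ∈ S → ∀ ⦃t⦄, t ∈ S → Commute s t
  isUnit : ∀ ⦃s⦄, s ∈ S → IsUnit s
  exists_mul_mem : ∀ a : A, ∃ s ∈ S, s * a ∈ B

structure IsFilteredLocalization {A : Type*} [Ring A] (B : Subring A) (S : Set A) (L₀ : A) : Prop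
    extends IsLeftDenominatorSet B S where
  adNilpotent : ∀ b ∈ B, ∃ n, (adOp L₀ L₀)^[n] b = 0

namespace IsLeftDenominatorSet

variable {A : Type*} [Ring A] {B : Subring A} {S : Set A}

lemma ne_zero [Nontrivial A] (hS : IsLeftDenominatorSet B S) {s : A} (hs : s ∈ S) : s ≠ 0 :=
  (hS.isUnit hs).ne_zero

noncomputable def denom (hS : IsLeftDenominatorSet B S) (x : A) : A :=
  (hS.exists_mul_mem x).choose

lemma denom_mem (hS : IsLeftDenominatorSet B S) (x : A) : hS.denom x ∈ S :=
  (hS.exists_mul_mem x).choose_spec.1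

lemma denom_mul_mem (hS : IsLeftDenominatorSet B S) (x : A) : hS.denom x * x ∈ B :=
  (hS.exists_mul_mem x).choose_spec.2

end IsLeftDenominatorSet

lemma adOp_mem {A : Type*} [Ring A] {B : Subring A} {l b : A} (hl : l ∈ B) (hb : b ∈ B) :
    adOp l l b ∈ B :=
  sub_mem (mul_mem hl hb) (mul_mem hb hl)

namespace IsFilteredLocalization

variable {A : Type*} [Ring A] {B : Subring A} {S : Set A} {L₀ : A}

-- `deg 0` is a junk value: statements about `deg x` assume `x ≠ 0`, and `degLE` adds `0` by hand.
noncomputable def deg (h : IsFilteredLocalization B S L₀) (x : A) : ℤ :=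
  degAd L₀ (h.denom x * x) - degAd L₀ (h.denom x)

variable [IsDomain A] [CharZero A]

lemma degAd_mul_of_mem (h : IsFilteredLocalization B S L₀) {b c : A} (hb : b ∈ B) (hc : c ∈ B)
    (hb0 : b ≠ 0) (hc0 : c ≠ 0) : degAd L₀ (b * c) = degAd L₀ b + degAd L₀ c :=
  degAd_mul hb0 hc0 (h.adNilpotent b hb) (h.adNilpotent c hc)

variable (h : IsFilteredLocalization B S L₀) {x y b t : A}

lemma deg_eq (hx : x ≠ 0) (ht : t ∈ S) (htx : t * x ∈ B) :
    h.deg x = degAd L₀ (t * x) - degAd L₀ t := by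
  have hu := h.denom_mem x
  have hcomm : t * (h.denom x * x) = h.denom x * (t * x) := by
    rw [← mul_assoc, (h.commute ht hu).eq, mul_assoc]
  have h₁ := h.degAd_mul_of_mem (h.subset ht) (h.denom_mul_mem x) (h.ne_zero ht)
    (mul_ne_zero (h.ne_zero hu) hx)
  have h₂ := h.degAd_mul_of_mem (h.subset hu) htx (h.ne_zero hu) (mul_ne_zero (h.ne_zero ht) hx)
  rw [hcomm] at h₁
  rw [deg]
  omega

lemma deg_of_mem (hb : b ∈ B) (hb0 : b ≠ 0) : h.deg b = degAd L₀ b := by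
  have hu := h.denom_mem b
  rw [deg, h.degAd_mul_of_mem (h.subset hu) hb (h.ne_zero hu) hb0]
  omega

lemma deg_mul_of_mem (hx : x ≠ 0) (hb : b ∈ B) (hb0 : b ≠ 0) :
    h.deg (x * b) = h.deg x + degAd L₀ b := by
  have hu := h.denom_mem x
  have hux : h.denom x * x ≠ 0 := mul_ne_zero (h.ne_zero hu) hx
  rw [h.deg_eq (mul_ne_zero hx hb0) hu (by rw [← mul_assoc]; exact mul_mem (h.denom_mul_mem x) hb),
    ← mul_assoc, h.degAd_mul_of_mem (h.denom_mul_mem x) hb hux hb0, deg]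
  omega

lemma deg_mul (hx : x ≠ 0) (hy : y ≠ 0) : h.deg (x * y) = h.deg x + h.deg y := by
  obtain ⟨u, hu, huy⟩ := h.exists_mul_mem y
  set v := (h.isUnit hu).unit⁻¹
  have hvu : (v : A) * u = 1 := (h.isUnit hu).val_inv_mul
  have hxv : x * v ≠ 0 := fun h0 ↦ hx (by rw [← mul_one x, ← hvu, ← mul_assoc, h0, zero_mul])
  have h₁ : h.deg (x * v * (u * y)) = h.deg (x * v) + degAd L₀ (u * y) :=
    h.deg_mul_of_mem hxv huy (mul_ne_zero (h.ne_zero hu) hy)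
  have h₂ : h.deg (x * v * u) = h.deg (x * v) + degAd L₀ u :=
    h.deg_mul_of_mem hxv (h.subset hu) (h.ne_zero hu)
  rw [mul_assoc, hvu, mul_one] at h₂
  rw [← mul_assoc, mul_assoc x, hvu, mul_one] at h₁
  rw [h₁, h.deg_eq hy hu huy]
  omega

lemma deg_neg (x : A) : h.deg (-x) = h.deg x := by
  rcases eq_or_ne x 0 with rfl | hx
  · rw [neg_zero]
  have hmem : h.denom x * -x ∈ B := by rw [mul_neg]; exact neg_mem (h.denom_mul_mem x)
  rw [h.deg_eq (neg_ne_zero.mpr hx) (h.denom_mem x) hmem, mul_neg, degAd_neg, deg]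

lemma deg_add_le (hx : x ≠ 0) (hy : y ≠ 0) (hxy : x + y ≠ 0) :
    h.deg (x + y) ≤ max (h.deg x) (h.deg y) := by
  obtain ⟨u, hu, hux⟩ := h.exists_mul_mem x
  obtain ⟨v, hv, hvy⟩ := h.exists_mul_mem y
  have htx : u * v * x ∈ B := by
    rw [(h.commute hu hv).eq, mul_assoc]; exact mul_mem (h.subset hv) hux
  have hty : u * v * y ∈ B := by rw [mul_assoc]; exact mul_mem (h.subset hu) hvy
  have hle := degAd_add_le (h.adNilpotent _ htx) (h.adNilpotent _ hty)
  rw [← mul_add] at hle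
  rw [h.deg_eq hxy (h.mul_mem hu hv) (by rw [mul_add]; exact add_mem htx hty),
    h.deg_eq hx (h.mul_mem hu hv) htx, h.deg_eq hy (h.mul_mem hu hv) hty]
  omega

def degLE (m : ℤ) : AddSubgroup A where
  carrier := {x | x = 0 ∨ h.deg x ≤ m}
  zero_mem' := Or.inl rfl
  add_mem' := by
    intro x y hx hy
    by_cases hx0 : x = 0
    · rwa [hx0, zero_add]
    by_cases hy0 : y = 0
    · rwa [hy0, add_zero]
    by_cases hxy : x + y = 0
    · exact Or.inl hxy
    exact Or.inr <| (h.deg_add_le hx0 hy0 hxy).trans <|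
      max_le (hx.resolve_left hx0) (hy.resolve_left hy0)
  neg_mem' := by
    rintro x (rfl | hx)
    · exact Or.inl neg_zero
    · exact Or.inr (by rwa [h.deg_neg])

lemma degLE_mono {m n : ℤ} (hmn : m ≤ n) : h.degLE m ≤ h.degLE n :=
  fun _ hx ↦ hx.imp_right (·.trans hmn)

lemma mem_degLE_deg (x : A) : x ∈ h.degLE (h.deg x) := Or.inr le_rfl

lemma mul_mem_degLE {m n : ℤ} (hx : x ∈ h.degLE m) (hy : y ∈ h.degLE n) :
    x * y ∈ h.degLE (m + n) := by
  by_cases hx0 : x = 0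
  · rw [hx0, zero_mul]; exact zero_mem _
  by_cases hy0 : y = 0
  · rw [hy0, mul_zero]; exact zero_mem _
  have := hx.resolve_left hx0
  have := hy.resolve_left hy0
  exact Or.inr (by rw [h.deg_mul hx0 hy0]; omega)

lemma mem_degLE_of_mem (hb : b ∈ B) : b ∈ h.degLE (degAd L₀ b) := by
  by_cases hb0 : b = 0
  · exact Or.inl hb0
  · exact Or.inr (h.deg_of_mem hb hb0).le

lemma eq_zero_of_mem_degLE {m : ℤ} (hb : b ∈ B) (hbm : b ∈ h.degLE m) (hm : m < 0) : b = 0 := by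
  by_contra hb0
  have := hbm.resolve_left hb0
  rw [h.deg_of_mem hb hb0] at this
  omega

lemma mem_degLE_of_mul_mem {m : ℤ} (ht : t ∈ S) (htx : t * x ∈ h.degLE m) :
    x ∈ h.degLE (m - degAd L₀ t) := by
  by_cases hx : x = 0
  · exact Or.inl hx
  have htx0 : t * x ≠ 0 := mul_ne_zero (h.ne_zero ht) hx
  have := htx.resolve_left htx0
  rw [h.deg_mul (h.ne_zero ht) hx, h.deg_of_mem (h.subset ht) (h.ne_zero ht)] at this
  exact Or.inr (by omega)

lemma adOp_mem_degLE_of_mem (hL₀ : L₀ ∈ B) (hb : b ∈ B) :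
    adOp L₀ L₀ b ∈ h.degLE (degAd L₀ b - 1) := by
  by_cases had : adOp L₀ L₀ b = 0
  · exact Or.inl had
  have := degAd_adOp_lt (h.adNilpotent b hb) had
  exact h.degLE_mono (by omega) (h.mem_degLE_of_mem (adOp_mem hL₀ hb))

lemma adOp_mem_degLE (hL₀ : L₀ ∈ B) {m : ℤ} (hx : x ∈ h.degLE m) :
    adOp L₀ L₀ x ∈ h.degLE (m - 1) := by
  by_cases hx0 : x = 0
  · rw [hx0]; simp only [adOp, mul_zero, zero_mul, sub_zero]; exact zero_mem _
  obtain ⟨t, ht, htx⟩ := h.exists_mul_mem x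
  have hdeg := h.deg_eq hx0 ht htx
  have hx' := hx.resolve_left hx0
  have hsplit : t * adOp L₀ L₀ x = adOp L₀ L₀ (t * x) - adOp L₀ L₀ t * x := by
    simp only [adOp]; noncomm_ring
  have hmem : t * adOp L₀ L₀ x ∈ h.degLE (m - 1 + degAd L₀ t) := by
    rw [hsplit]
    refine sub_mem (h.degLE_mono ?_ (h.adOp_mem_degLE_of_mem hL₀ htx))
      (h.degLE_mono ?_ (h.mul_mem_degLE (h.adOp_mem_degLE_of_mem hL₀ (h.subset ht)) hx))
    all_goals omega
  simpa using h.mem_degLE_of_mul_mem ht hmem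

lemma adOp_mem_degLE_of_sub_mem (hL₀ : L₀ ∈ B) {L : A} (hL : L - L₀ ∈ h.degLE (-1)) {m : ℤ}
    (hx : x ∈ h.degLE m) : adOp L L x ∈ h.degLE (m - 1) := by
  have hsplit : adOp L L x = adOp L₀ L₀ x + ((L - L₀) * x - x * (L - L₀)) := by
    simp only [adOp]; noncomm_ring
  rw [hsplit]
  refine add_mem (h.adOp_mem_degLE hL₀ hx) (sub_mem ?_ ?_)
  · exact h.degLE_mono (by omega) (h.mul_mem_degLE hL hx)
  · exact h.degLE_mono (by omega) (h.mul_mem_degLE hx hL)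

lemma iterate_adOp_mem_degLE (hL₀ : L₀ ∈ B) {L : A} (hL : L - L₀ ∈ h.degLE (-1)) {m : ℤ}
    (hx : x ∈ h.degLE m) (n : ℕ) : (adOp L L)^[n] x ∈ h.degLE (m - n) := by
  induction n with
  | zero => simpa using hx
  | succ n ih =>
    rw [Function.iterate_succ_apply']
    simpa [sub_sub] using h.adOp_mem_degLE_of_sub_mem hL₀ hL ih

theorem exists_iterate_adOp_eq_zero (hL₀ : L₀ ∈ B) {L : A} (hL : L - L₀ ∈ h.degLE (-1))
    {P : Set A} {a : A} (ha : a ∈ P) (hP : ∀ x ∈ P, adOp L L x ∈ P) {s : A} (hs : s ∈ S)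
    (hPB : ∀ x ∈ P, s * x * s ∈ B) : ∃ N, (adOp L L)^[N] a = 0 := by
  set N := (h.deg a + 2 * degAd L₀ s + 1).toNat
  set y := (adOp L L)^[N] a
  have hyP : y ∈ P := Function.Iterate.rec (· ∈ P) ha hP N
  have hy : y ∈ h.degLE (h.deg a - N) := h.iterate_adOp_mem_degLE hL₀ hL (h.mem_degLE_deg a) N
  have hsys : s * y * s ∈ h.degLE (degAd L₀ s + (h.deg a - N) + degAd L₀ s) :=
    h.mul_mem_degLE (h.mul_mem_degLE (h.mem_degLE_of_mem (h.subset hs)) hy)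
      (h.mem_degLE_of_mem (h.subset hs))
  refine ⟨N, ?_⟩
  have := h.eq_zero_of_mem_degLE (hPB y hyP) hsys (by omega)
  simpa [h.ne_zero hs] using this

end IsFilteredLocalization

section Module

open Pointwise

variable {A M : Type*} [Ring A] [AddCommGroup M] [Module A M]

def IsCommensurable (S : Set A) (U₀ U : Set M) : Prop :=
  ∃ s ∈ S, (∀ u ∈ U₀, s • u ∈ U) ∧ ∀ u ∈ U, s • u ∈ U₀

lemma isSubspace.sub_mem {k : Type*} [CommRing k] [Algebra k A] {U : Set M}
    (hU : isSubspace k A U) {u v : M} (hu : u ∈ U) (hv : v ∈ U) : u - v ∈ U := by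
  have hneg := hU.2.2 (-1) v hv
  rw [map_neg, map_one, neg_one_smul] at hneg
  exact sub_eq_add_neg u v ▸ hU.2.1 u hu _ hneg

lemma adOp_smul_mem {N : Type*} [AddCommGroup N] [Module A N] {X : Set N}
    (hX : ∀ x ∈ X, ∀ y ∈ X, x - y ∈ X) {L a : A} (hLX : ∀ x ∈ X, L • x ∈ X)
    (haX : ∀ x ∈ X, a • x ∈ X) : ∀ x ∈ X, adOp L L a • x ∈ X := fun x hx ↦ by
  rw [adOp, sub_smul, mul_smul, mul_smul]
  exact hX _ (hLX _ (haX x hx)) _ (haX _ (hLX x hx))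

lemma adOp_mul_smul_mem {k : Type*} [CommRing k] [Algebra k A] {U₀ U : Set M}
    (hU : isSubspace k A U) {L : A} (hLU : ∀ u ∈ U, L • u ∈ U) {a : A}
    (ha : ∀ b : A, (∀ u ∈ U₀, b • u ∈ U) → ∀ u ∈ U₀, (a * b) • u ∈ U) :
    ∀ b : A, (∀ u ∈ U₀, b • u ∈ U) → ∀ u ∈ U₀, (adOp L L a * b) • u ∈ U :=
  adOp_smul_mem (X := {b : A | ∀ u ∈ U₀, b • u ∈ U}) (a := a)
    (fun b hb b' hb' u hu ↦ by rw [sub_smul]; exact hU.sub_mem (hb u hu) (hb' u hu))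
    (fun b hb u hu ↦ by rw [smul_eq_mul, mul_smul]; exact hLU _ (hb u hu)) ha

variable {k : Type*} [CommSemiring k] [Algebra k A]

lemma isSubspace.add_smul_set {U : Set M} (hU : isSubspace k A U) (a : A) :
    isSubspace k A (U + a • U) := by
  obtain ⟨hU0, hUadd, hUsmul⟩ := hU
  refine ⟨⟨0, hU0, 0, ⟨0, hU0, smul_zero a⟩, add_zero 0⟩, ?_, ?_⟩
  · rintro _ ⟨x, hx, _, ⟨v, hv, rfl⟩, rfl⟩ _ ⟨x', hx', _, ⟨v', hv', rfl⟩, rfl⟩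
    refine ⟨x + x', hUadd x hx x' hx', a • (v + v'), ⟨v + v', hUadd v hv v' hv', rfl⟩, ?_⟩
    dsimp only
    rw [smul_add]; abel
  · rintro c _ ⟨x, hx, _, ⟨v, hv, rfl⟩, rfl⟩
    refine ⟨_, hUsmul c x hx, _, ⟨_, hUsmul c v hv, rfl⟩, ?_⟩
    dsimp only
    rw [smul_add, smul_smul, smul_smul, Algebra.commutes]

lemma smul_mem_add_smul_set {U : Set M} (hU : isSubspace k A U) {L a : A}
    (hLU : ∀ u ∈ U, L • u ∈ U) (ha : ∀ u ∈ U, adOp L L a • u ∈ U) :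
    ∀ m ∈ U + a • U, L • m ∈ U + a • U := by
  rintro _ ⟨x, hx, _, ⟨v, hv, rfl⟩, rfl⟩
  refine ⟨L • x + adOp L L a • v, hU.2.1 _ (hLU x hx) _ (ha v hv), _, ⟨L • v, hLU v hv, rfl⟩, ?_⟩
  dsimp only
  rw [smul_add, adOp, sub_smul, smul_smul, smul_smul]
  abel

lemma IsLeftDenominatorSet.isCommensurable_add_smul_set {B : Subring A} {S : Set A}
    (hS : IsLeftDenominatorSet B S) {U₀ U : Set M} (hBU₀ : ∀ b ∈ B, ∀ u ∈ U₀, b • u ∈ U₀)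
    (hU₀add : ∀ u ∈ U₀, ∀ v ∈ U₀, u + v ∈ U₀) (hU0 : (0 : M) ∈ U)
    (hU : IsCommensurable S U₀ U) (a : A) : IsCommensurable S U₀ (U + a • U) := by
  obtain ⟨s, hs, hsU₀, hsU⟩ := hU
  set s' := (hS.isUnit hs).unit⁻¹
  obtain ⟨q, hq, hqa⟩ := hS.exists_mul_mem (a * s')
  refine ⟨s * q, hS.mul_mem hs hq, fun u hu ↦ ?_, ?_⟩
  · rw [mul_smul]
    exact Set.subset_add_left U (Set.zero_mem_smul_set hU0) (hsU₀ _ (hBU₀ q (hS.subset hq) u hu))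
  · rintro _ ⟨x, hx, _, ⟨v, hv, rfl⟩, rfl⟩
    have hsqa : s * q * a = s * (q * (a * s')) * s := by
      simp only [mul_assoc, s', IsUnit.val_inv_mul, mul_one]
    rw [smul_add, smul_smul, hsqa, (hS.commute hs hq).eq, mul_smul, mul_smul, mul_smul]
    exact hU₀add _ (hBU₀ q (hS.subset hq) _ (hsU x hx))
      _ (hBU₀ s (hS.subset hs) _ (hBU₀ _ hqa _ (hsU v hv)))

theorem smul_mem_of_iterate_adOp_eq_zero {S : Set A} {U₀ U : Set M} (hU : isSubspace k A U)
    {L : A} (hLU : ∀ u ∈ U, L • u ∈ U) (hcomm : ∀ a : A, IsCommensurable S U₀ (U + a • U))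
    (hUmax : ∀ U' : Set M, isSubspace k A U' → (∀ u ∈ U', L • u ∈ U') →
      IsCommensurable S U₀ U' → U ⊆ U' → U' = U)
    {n : ℕ} {a : A} (ha : (adOp L L)^[n] a = 0) : ∀ u ∈ U, a • u ∈ U := by
  induction n generalizing a with
  | zero =>
    rw [Function.iterate_zero_apply] at ha
    intro u _
    rw [ha, zero_smul]
    exact hU.1
  | succ n ih =>
    have had := ih (Function.iterate_succ_apply _ _ _ ▸ ha)
    have hUa := hUmax _ (hU.add_smul_set a) (smul_mem_add_smul_set hU hLU had) (hcomm a)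
      (Set.subset_add_left U (Set.zero_mem_smul_set hU.1))
    intro u hu
    exact hUa ▸ Set.subset_add_right (a • U) hU.1 (Set.smul_mem_smul_set hu)

end Module

theorem stmt9_general
    {k A M : Type*} [Field k] [CharZero k] [Ring A] [IsDomain A] [Algebra k A]
    [AddCommGroup M] [Module A M]
    (B R : Subalgebra k A) (hRB : R ≤ B)
    (hRcomm : ∀ x ∈ R, ∀ y ∈ R, x * y = y * x)
    (S : Set A) (hSR : S ⊆ (R : Set A))
    (hSmul : ∀ s ∈ S, ∀ t ∈ S, s * t ∈ S)
    (hSunit : ∀ s ∈ S, IsUnit s)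
    (hleft : ∀ a : A, ∃ s ∈ S, s * a ∈ B)
    (U₀ : Set M)
    (hU₀add : ∀ u ∈ U₀, ∀ v ∈ U₀, u + v ∈ U₀)
    (hB : ∀ a : A, a ∈ B ↔ ∀ u ∈ U₀, a • u ∈ U₀)
    (L₀ : A) (hL₀ : L₀ ∈ B)
    (hnil : ∀ b ∈ B, ∃ n : ℕ, (adOp L₀ L₀)^[n] b = 0)
    (L : A) (h2 : cond2 B S L₀ L)
    (U : Set M) (hU : isSubspace k A U)
    (hLU : ∀ u ∈ U, L • u ∈ U)
    (hcond1b : ∃ s ∈ S, (∀ u ∈ U₀, s • u ∈ U) ∧ (∀ u ∈ U, s • u ∈ U₀))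
    (hUmax : ∀ U' : Set M, isSubspace k A U' → (∀ u ∈ U', L • u ∈ U') →
      (∃ s ∈ S, (∀ u ∈ U₀, s • u ∈ U') ∧ (∀ u ∈ U', s • u ∈ U₀)) → U ⊆ U' → U' = U) :
    {a : A | ∀ u ∈ U, a • u ∈ U} = {a : A | ∃ N : ℕ, (adOp L L)^[N] a = 0} ∧
    {a : A | ∀ u ∈ U, a • u ∈ U} =
      {a : A | ∀ b : A, (∀ u ∈ U₀, b • u ∈ U) → ∀ u ∈ U₀, (a * b) • u ∈ U} := by
  have : CharZero A := charZero_of_injective_algebraMap (algebraMap k A).injective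
  have h : IsFilteredLocalization B.toSubring S L₀ :=
    { subset := fun _ hs ↦ hRB (hSR hs)
      mul_mem := hSmul
      commute := fun s hs t ht ↦ hRcomm s (hSR hs) t (hSR ht)
      isUnit := hSunit
      exists_mul_mem := hleft
      adNilpotent := hnil }
  have hBU₀ : ∀ b ∈ B, ∀ u ∈ U₀, b • u ∈ U₀ := fun b hb ↦ (hB b).mp hb
  obtain ⟨s, hs, hsU₀, hsU⟩ := hcond1b
  have hL : L - L₀ ∈ h.degLE (-1) := by
    rcases h2 with rfl | ⟨t, ht, htL, -, hdeg⟩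
    · rw [sub_self]; exact zero_mem _
    · exact h.degLE_mono (by omega) (h.mem_degLE_of_mul_mem ht (h.mem_degLE_of_mem htL))
  have hnil_D : ∀ a, (∃ N, (adOp L L)^[N] a = 0) → ∀ u ∈ U, a • u ∈ U := fun a ⟨_, hN⟩ ↦
    smul_mem_of_iterate_adOp_eq_zero hU hLU
      (h.isCommensurable_add_smul_set hBU₀ hU₀add hU.1 ⟨s, hs, hsU₀, hsU⟩) hUmax hN
  set E : Set A := {a | ∀ b : A, (∀ u ∈ U₀, b • u ∈ U) → ∀ u ∈ U₀, (a * b) • u ∈ U}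
  have hD_E : ∀ a, (∀ u ∈ U, a • u ∈ U) → a ∈ E := fun a ha b hb u hu ↦ by
    rw [mul_smul]; exact ha _ (hb u hu)
  have hE_nil : ∀ a ∈ E, ∃ N, (adOp L L)^[N] a = 0 := fun a ha ↦
    h.exists_iterate_adOp_eq_zero hL₀ hL ha (fun _ ↦ adOp_mul_smul_mem hU hLU) hs
      fun x hx ↦ (hB _).mpr fun u hu ↦ by rw [mul_assoc, mul_smul]; exact hsU _ (hx s hsU₀ u hu)
  exact ⟨Set.ext fun a ↦ ⟨fun ha ↦ hE_nil a (hD_E a ha), hnil_D a⟩,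
    Set.ext fun a ↦ ⟨hD_E a, fun ha ↦ hnil_D a (hE_nil a ha)⟩⟩

/-- Remark 5.2 together with Proposition 4.5(b): for maximal `U`, the ring
`𝓓 = {a ∈ A : a·U ⊆ U}` is the `ad_L`-nilpotent part of `A`, and coincides with
`{a ∈ A : a·𝓜 ⊆ 𝓜}` where `𝓜 = {a ∈ A : a·U₀ ⊆ U}`. -/
theorem stmt9
    {k A M : Type*} [Field k] [CharZero k] [Ring A] [IsDomain A] [Algebra k A]
    [AddCommGroup M] [Module A M]
    (B R : Subalgebra k A) (hRB : R ≤ B)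
    (hRcomm : ∀ x ∈ R, ∀ y ∈ R, x * y = y * x)
    (S : Set A) (hSR : S ⊆ (R : Set A)) (hS0 : (0 : A) ∉ S) (hS1 : (1 : A) ∈ S)
    (hSmul : ∀ s ∈ S, ∀ t ∈ S, s * t ∈ S)
    (hSunit : ∀ s ∈ S, IsUnit s)
    (hleft : ∀ a : A, ∃ s ∈ S, s * a ∈ B)
    (hright : ∀ a : A, ∃ s ∈ S, a * s ∈ B)
    (U₀ : Set M) (hU₀0 : (0 : M) ∈ U₀)
    (hU₀add : ∀ u ∈ U₀, ∀ v ∈ U₀, u + v ∈ U₀)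
    (hU₀neg : ∀ u ∈ U₀, -u ∈ U₀)
    (hU₀R : ∀ r ∈ (R : Set A), ∀ u ∈ U₀, r • u ∈ U₀)
    (hB : ∀ a : A, a ∈ B ↔ ∀ u ∈ U₀, a • u ∈ U₀)
    (L₀ : A) (hL₀ : L₀ ∈ B)
    (hnil : ∀ b ∈ B, ∃ n : ℕ, (adOp L₀ L₀)^[n] b = 0)
    (L : A) (h2 : cond2 B S L₀ L)
    (U : Set M) (hU : isSubspace k A U)
    (hLU : ∀ u ∈ U, L • u ∈ U)
    (hcond1b : ∃ s ∈ S, (∀ u ∈ U₀, s • u ∈ U) ∧ (∀ u ∈ U, s • u ∈ U₀))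
    (hUmax : ∀ U' : Set M, isSubspace k A U' → (∀ u ∈ U', L • u ∈ U') →
      (∃ s ∈ S, (∀ u ∈ U₀, s • u ∈ U') ∧ (∀ u ∈ U', s • u ∈ U₀)) → U ⊆ U' → U' = U) :
    {a : A | ∀ u ∈ U, a • u ∈ U} = {a : A | ∃ N : ℕ, (adOp L L)^[N] a = 0} ∧
    {a : A | ∀ u ∈ U, a • u ∈ U} =
      {a : A | ∀ b : A, (∀ u ∈ U₀, b • u ∈ U) → ∀ u ∈ U₀, (a * b) • u ∈ U} :=
  stmt9_general B R hRB hRcomm S hSR hSmul hSunit hleft U₀ hU₀add hB L₀ hL₀ hnil L h2 U hU hLU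
    hcond1b hUmax
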